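/- arXiv:2309.03848 — 2 statements merged into one kernel-verified Lean document; each statement's English description precedes it below -/
import Mathlib

section
/- Let ω : ℕ → ℝ be a function with ω(r) → ∞ as r → ∞, and for each r let p(r) = (log r + ω(r))/r, assuming p(r) ≤ 1. Let X be a random edge-subgraph of K_{r,r} drawn from G(K_{r,r}, p(r)). Then the probability that X is connected tends to 1 as r → ∞. -/
open SimpleGraph

/-- The Bernoulli measure on `Bool` with success probability `p`. -/
noncomputable def bernoulliMeasure (p : ℝ) : MeasureTheory.Measure Bool :=
  ENNReal.ofReal p • MeasureTheory.Measure.dirac true +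
    ENNReal.ofReal (1 - p) • MeasureTheory.Measure.dirac false

/-- The distribution `G(K_{r,r}, p)`: each of the `r * r` potential edges of the complete
bipartite graph is present independently with probability `p`; outcomes are indexed by
functions recording the presence of each potential edge. -/
noncomputable def bipartiteRandomModel (r : ℕ) (p : ℝ) :
    MeasureTheory.Measure (Fin r × Fin r → Bool) :=
  MeasureTheory.Measure.pi fun _ => bernoulliMeasure p

/-- The edge-subgraph of `K_{r,r}` determined by an outcome `ω`. -/
def graphOf {r : ℕ} (ω : Fin r × Fin r → Bool) : SimpleGraph (Fin r ⊕ Fin r) :=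
  SimpleGraph.fromRel (fun x y => ∃ i j, x = Sum.inl i ∧ y = Sum.inr j ∧ ω (i, j) = true)

/-! If the graph is disconnected, some vertex set `S` with `1 ≤ |S| ≤ r` is closed under
adjacency, so the at least `|S| r - |S|² / 2` edges of `K_{r,r}` leaving `S` are all absent.
A union bound over `S`, with `C(2r, s) ≤ (2er / s)^s` and `r p = log r + ω`, bounds the
probability of this by `∑ₛ exp (-s (ω / 2 - 2))`, which tends to `0`. -/

open MeasureTheory SimpleGraph Finset Filter Real
open scoped Nat

lemma isProbabilityMeasure_bernoulliMeasure {p : ℝ} (hp0 : 0 ≤ p) (hp1 : p ≤ 1) :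
    IsProbabilityMeasure (bernoulliMeasure p) := by
  constructor
  simp [bernoulliMeasure, ← ENNReal.ofReal_add hp0 (sub_nonneg.2 hp1)]

lemma isProbabilityMeasure_bipartiteRandomModel (r : ℕ) {p : ℝ} (hp0 : 0 ≤ p)
    (hp1 : p ≤ 1) :
    IsProbabilityMeasure (bipartiteRandomModel r p) := by
  have := isProbabilityMeasure_bernoulliMeasure hp0 hp1
  exact Measure.pi.instIsProbabilityMeasure _

lemma bipartiteRandomModel_forall_eq_false {r : ℕ} {p : ℝ} (hp0 : 0 ≤ p) (hp1 : p ≤ 1)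
    (F : Finset (Fin r × Fin r)) :
    bipartiteRandomModel r p {ω | ∀ e ∈ F, ω e = false} = ENNReal.ofReal (1 - p) ^ #F := by
  have := isProbabilityMeasure_bernoulliMeasure hp0 hp1
  have hcyl : {ω : Fin r × Fin r → Bool | ∀ e ∈ F, ω e = false}
      = (F : Set (Fin r × Fin r)).pi fun _ => {false} := by
    ext ω; simp
  rw [hcyl, bipartiteRandomModel, Measure.pi_pi_finset]
  simp [bernoulliMeasure]

theorem SimpleGraph.exists_adjClosed_finset_of_not_connected {V : Type*} [Fintype V]
    [Nonempty V] {G : SimpleGraph V} (h : ¬G.Connected) :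
    ∃ S : Finset V, S.Nonempty ∧ 2 * #S ≤ Fintype.card V ∧
      ∀ u ∈ S, ∀ v, G.Adj u v → v ∈ S := by
  classical
  obtain ⟨u, v, huv⟩ : ∃ u v, ¬G.Reachable u v := by
    by_contra! h'
    exact h ⟨h'⟩
  set T : Finset V := {x | G.Reachable u x}
  have hT : ∀ x y, G.Adj x y → (x ∈ T ↔ y ∈ T) := fun x y hxy => by
    simp only [T, mem_filter, mem_univ, true_and]
    exact ⟨fun h => h.trans hxy.reachable, fun h => h.trans hxy.symm.reachable⟩
  by_cases hsmall : 2 * #T ≤ Fintype.card V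
  · exact ⟨T, ⟨u, by simp [T]⟩, hsmall, fun x hx y hxy => (hT x y hxy).1 hx⟩
  · refine ⟨Tᶜ, ⟨v, by simpa [T] using huv⟩, ?_, fun x hx y hxy => ?_⟩
    · rw [card_compl]; omega
    · simpa [(hT x y hxy).not] using hx

def crossEdges {r : ℕ} (S : Finset (Fin r ⊕ Fin r)) : Finset (Fin r × Fin r) :=
  {e | ¬(Sum.inl e.1 ∈ S ↔ Sum.inr e.2 ∈ S)}

lemma eq_false_of_mem_crossEdges {r : ℕ} {ω : Fin r × Fin r → Bool}
    {S : Finset (Fin r ⊕ Fin r)} (hS : ∀ u ∈ S, ∀ v, (graphOf ω).Adj u v → v ∈ S)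
    {e : Fin r × Fin r} (he : e ∈ crossEdges S) : ω e = false := by
  have hadj : ω e = true → (graphOf ω).Adj (Sum.inl e.1) (Sum.inr e.2) := fun h => by
    simpa [graphOf] using h
  simp only [crossEdges, mem_filter, mem_univ, true_and] at he
  by_contra h
  exact he ⟨fun hl => hS _ hl _ (hadj (by simpa using h)),
    fun hr => hS _ hr _ (hadj (by simpa using h)).symm⟩

lemma card_crossEdges {r : ℕ} (S : Finset (Fin r ⊕ Fin r)) :
    #(crossEdges S) = #S.toLeft * (r - #S.toRight) + (r - #S.toLeft) * #S.toRight := by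
  have hsplit : crossEdges S = S.toLeft ×ˢ S.toRightᶜ ∪ S.toLeftᶜ ×ˢ S.toRight := by
    ext ⟨i, j⟩
    simp only [crossEdges, mem_filter, mem_univ, true_and, mem_union, mem_product, mem_compl,
      mem_toLeft, mem_toRight]
    tauto
  rw [hsplit, card_union_of_disjoint, card_product, card_product, card_compl, card_compl]
  · simp
  · exact disjoint_product.2 (Or.inl disjoint_compl_right)

lemma mul_sub_sq_div_two_le_card_crossEdges {r : ℕ} (S : Finset (Fin r ⊕ Fin r)) :
    (#S : ℝ) * r - (#S : ℝ) ^ 2 / 2 ≤ #(crossEdges S) := by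
  have ha : #S.toLeft ≤ r := by simpa using card_le_univ S.toLeft
  have hb : #S.toRight ≤ r := by simpa using card_le_univ S.toRight
  rw [card_crossEdges, ← card_toLeft_add_card_toRight]
  push_cast [Nat.cast_sub ha, Nat.cast_sub hb]
  nlinarith [sq_nonneg ((#S.toLeft : ℝ) - #S.toRight)]

lemma Nat.choose_le_exp {n s : ℕ} (hn : 0 < n) (hs : 0 < s) :
    (n.choose s : ℝ) ≤ exp (s * (Real.log n + 1 - Real.log s)) := by
  have hfac : (0 : ℝ) < s ! := by positivity
  have hsfac : (s : ℝ) ^ s ≤ exp s * (s ! : ℝ) :=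
    (div_le_iff₀ hfac).1 (pow_div_factorial_le_exp (s : ℝ) s.cast_nonneg s)
  calc (n.choose s : ℝ) ≤ (n : ℝ) ^ s / s ! := Nat.choose_le_pow_div s n
    _ ≤ (n : ℝ) ^ s * exp s / (s : ℝ) ^ s := by
      rw [div_le_div_iff₀ hfac (by positivity), mul_assoc]
      gcongr
    _ = exp (s * (Real.log n + 1 - Real.log s)) := by
      rw [mul_sub, mul_add, mul_one, exp_sub, exp_add, exp_nat_mul, exp_nat_mul,
        exp_log (by positivity), exp_log (by positivity)]

lemma neg_log_add_mul_le_max {p s r : ℝ} (hp : 0 ≤ p) (hs : 1 ≤ s) (hsr : s ≤ r) :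
    -log s + p * s ≤ max p (-log r + p * r) := by
  have hconv : ConvexOn ℝ (Set.Ioi 0) fun x => -log x + p * x :=
    strictConcaveOn_log_Ioi.concaveOn.neg.add ((convexOn_id (convex_Ioi 0)).smul hp)
  simpa using hconv.le_max_of_mem_Icc (Set.mem_Ioi.2 one_pos)
    (Set.mem_Ioi.2 (by linarith)) ⟨hs, hsr⟩

lemma choose_mul_exp_le_exp_pow {r s : ℕ} {p w : ℝ} (hs : 1 ≤ s) (hsr : s ≤ r)
    (hp0 : 0 ≤ p) (hp1 : p ≤ 1) (hw : 1 ≤ w) (hpw : log r + w ≤ p * r) :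
    ((r + r).choose s : ℝ) * exp (-(p * (s * r - s ^ 2 / 2))) ≤ exp (-(w / 2 - 2)) ^ s := by
  have hs' : (1 : ℝ) ≤ s := by exact_mod_cast hs
  have hsr' : (s : ℝ) ≤ r := by exact_mod_cast hsr
  have hr : (1 : ℝ) ≤ r := hs'.trans hsr'
  have hlogr : 0 ≤ log r := log_nonneg hr
  have hlog2 : log 2 ≤ 1 := by linarith [log_le_sub_one_of_pos (zero_lt_two' ℝ)]
  -- the exponent is convex in `s`, so only `s = 1` and `s = r` need checking
  have hbracket : log 2 + log r + 1 - p * r + (-log s + p / 2 * s) ≤ 2 - w / 2 := by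
    rcases le_max_iff.1 (neg_log_add_mul_le_max (p := p / 2) (by positivity) hs' hsr') with h | h
    · linarith
    · linarith
  calc ((r + r).choose s : ℝ) * exp (-(p * (s * r - s ^ 2 / 2)))
      ≤ exp (s * (log ↑(r + r) + 1 - log s)) * exp (-(p * (s * r - s ^ 2 / 2))) := by
        gcongr
        exact Nat.choose_le_exp (by omega) (by omega)
    _ = exp (s * (log 2 + log r + 1 - p * r + (-log s + p / 2 * s))) := by
        rw [← exp_add, Nat.cast_add, ← two_mul, log_mul two_ne_zero (by positivity)]
        ring_nf
    _ ≤ exp (s * (2 - w / 2)) := by gcongr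
    _ = exp (-(w / 2 - 2)) ^ s := by rw [← exp_nat_mul]; ring_nf

lemma bipartiteRandomModel_not_connected_le_sum {r : ℕ} {p : ℝ} (hr : 1 ≤ r) (hp0 : 0 ≤ p)
    (hp1 : p ≤ 1) :
    bipartiteRandomModel r p {ω | ¬(graphOf ω).Connected} ≤
      ∑ s ∈ Icc 1 r,
        ENNReal.ofReal (((r + r).choose s : ℝ) * exp (-(p * (s * r - s ^ 2 / 2)))) := by
  have : Nonempty (Fin r ⊕ Fin r) := ⟨Sum.inl ⟨0, hr⟩⟩
  have hcover : {ω | ¬(graphOf ω).Connected} ⊆ ⋃ s ∈ Icc 1 r,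
      ⋃ S ∈ powersetCard s (univ : Finset (Fin r ⊕ Fin r)),
        {ω | ∀ e ∈ crossEdges S, ω e = false} := by
    intro ω hω
    obtain ⟨S, hSne, hScard, hS⟩ := exists_adjClosed_finset_of_not_connected hω
    simp only [Fintype.card_sum, Fintype.card_fin] at hScard
    simp only [Set.mem_iUnion, Set.mem_ofPred_eq, mem_Icc, mem_powersetCard, exists_prop]
    exact ⟨#S, ⟨hSne.card_pos, by omega⟩, S, ⟨subset_univ S, rfl⟩,
      fun e he => eq_false_of_mem_crossEdges hS he⟩
  have hcut : ∀ s, ∀ S ∈ powersetCard s (univ : Finset (Fin r ⊕ Fin r)),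
      bipartiteRandomModel r p {ω | ∀ e ∈ crossEdges S, ω e = false} ≤
        ENNReal.ofReal (exp (-(p * (s * r - s ^ 2 / 2)))) := by
    intro s S hS
    rw [bipartiteRandomModel_forall_eq_false hp0 hp1, ← ENNReal.ofReal_pow (sub_nonneg.2 hp1)]
    apply ENNReal.ofReal_le_ofReal
    calc (1 - p) ^ #(crossEdges S) ≤ exp (-p) ^ #(crossEdges S) := by
          gcongr
          exact one_sub_le_exp_neg p
      _ = exp (-(p * #(crossEdges S))) := by rw [← exp_nat_mul]; ring_nf
      _ ≤ exp (-(p * (s * r - s ^ 2 / 2))) := by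
          gcongr
          exact (mem_powersetCard.1 hS).2 ▸ mul_sub_sq_div_two_le_card_crossEdges S
  calc bipartiteRandomModel r p {ω | ¬(graphOf ω).Connected}
      ≤ ∑ s ∈ Icc 1 r, bipartiteRandomModel r p
          (⋃ S ∈ powersetCard s univ, {ω | ∀ e ∈ crossEdges S, ω e = false}) :=
        (measure_mono hcover).trans (measure_biUnion_finset_le _ _)
    _ ≤ ∑ s ∈ Icc 1 r, ∑ S ∈ powersetCard s (univ : Finset (Fin r ⊕ Fin r)),
          ENNReal.ofReal (exp (-(p * (s * r - s ^ 2 / 2)))) := by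
        gcongr with s
        exact (measure_biUnion_finset_le _ _).trans (sum_le_sum (hcut s))
    _ = _ := by
        refine sum_congr rfl fun s _ => ?_
        rw [sum_const, card_powersetCard, card_univ, Fintype.card_sum, Fintype.card_fin,
          nsmul_eq_mul, ENNReal.ofReal_mul (by positivity), ENNReal.ofReal_natCast]

lemma bipartiteRandomModel_not_connected_le {r : ℕ} {p w : ℝ} (hr : 1 ≤ r) (hp0 : 0 ≤ p)
    (hp1 : p ≤ 1) (hw : 4 < w) (hpw : log r + w ≤ p * r) :
    bipartiteRandomModel r p {ω | ¬(graphOf ω).Connected} ≤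
      ENNReal.ofReal (exp (-(w / 2 - 2)) / (1 - exp (-(w / 2 - 2)))) := by
  set x := exp (-(w / 2 - 2))
  have hx1 : x < 1 := exp_lt_one_iff.2 (by linarith)
  calc bipartiteRandomModel r p {ω | ¬(graphOf ω).Connected}
      ≤ ∑ s ∈ Icc 1 r,
          ENNReal.ofReal (((r + r).choose s : ℝ) * exp (-(p * (s * r - s ^ 2 / 2)))) :=
        bipartiteRandomModel_not_connected_le_sum hr hp0 hp1
    _ ≤ ∑ s ∈ Icc 1 r, ENNReal.ofReal (x ^ s) := by
        gcongr with s hs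
        rw [mem_Icc] at hs
        exact choose_mul_exp_le_exp_pow hs.1 hs.2 hp0 hp1 (by linarith) hpw
    _ = ENNReal.ofReal (∑ s ∈ Ico 1 (r + 1), x ^ s) := by
        rw [ENNReal.ofReal_sum_of_nonneg fun s _ => by positivity, Ico_add_one_right_eq_Icc]
    _ ≤ ENNReal.ofReal (x / (1 - x)) := ENNReal.ofReal_le_ofReal <|
        (geom_sum_Ico_le_of_lt_one (exp_nonneg _) hx1).trans_eq (by rw [pow_one])

theorem stmt12 (w : ℕ → ℝ) (hw : Filter.Tendsto w Filter.atTop Filter.atTop)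
    (p : ℕ → ℝ) (hp : ∀ r : ℕ, p r = (Real.log r + w r) / r)
    (hp1 : ∀ r : ℕ, p r ≤ 1) :
    Filter.Tendsto
      (fun r : ℕ => bipartiteRandomModel r (p r) {ω | (graphOf ω).Connected})
      Filter.atTop (nhds 1) := by
  set x : ℕ → ℝ := fun r => exp (-(w r / 2 - 2))
  have hx : Tendsto x atTop (nhds 0) :=
    tendsto_exp_atBot.comp <| tendsto_neg_atTop_atBot.comp <|
      tendsto_atTop_add_const_right _ (-2) (hw.atTop_div_const two_pos)
  have hbound : Tendsto (fun r => ENNReal.ofReal (x r / (1 - x r))) atTop (nhds 0) := by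
    simpa using ENNReal.tendsto_ofReal (hx.div (tendsto_const_nhds.sub hx) (by norm_num))
  have hlarge :
      ∀ᶠ r in atTop, 1 ≤ r ∧ 0 ≤ p r ∧ 4 < w r ∧ log r + w r ≤ p r * r := by
    filter_upwards [eventually_ge_atTop 1, hw.eventually_gt_atTop 4] with r hr hwr
    have hr' : (1 : ℝ) ≤ r := by exact_mod_cast hr
    have hpw : log r + w r = p r * r := by rw [hp r, div_mul_cancel₀ _ (by positivity)]
    have hp0 : 0 ≤ p r := hp r ▸ div_nonneg (by linarith [log_nonneg hr']) (by positivity)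
    exact ⟨hr, hp0, hwr, hpw.le⟩
  have hdisc : Tendsto (fun r => bipartiteRandomModel r (p r) {ω | ¬(graphOf ω).Connected})
      atTop (nhds 0) :=
    tendsto_of_tendsto_of_tendsto_of_le_of_le' tendsto_const_nhds hbound
      (.of_forall fun _ => bot_le) (hlarge.mono fun r ⟨hr, hp0, hwr, hpw⟩ =>
        bipartiteRandomModel_not_connected_le hr hp0 (hp1 r) hwr hpw)
  rw [← tsub_zero (1 : ENNReal)]
  refine (ENNReal.Tendsto.sub tendsto_const_nhds hdisc (.inl ENNReal.one_ne_top)).congr' ?_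
  filter_upwards [hlarge] with r hr
  have := isProbabilityMeasure_bipartiteRandomModel r hr.2.1 (hp1 r)
  rw [← prob_compl_eq_one_sub (Set.toFinite _).measurableSet]
  simp only [Set.compl_ofPred, not_not]
end

section
/- Let ω : ℕ → ℝ be a function with ω(r) → ∞ as r → ∞, and for each r let p(r) = (log r − ω(r))/r, assuming p(r) ≥ 0. Let X be a random edge-subgraph of K_{r,r} drawn from G(K_{r,r}, p(r)). Then the probability that X contains an isolated vertex (a vertex of degree 0) tends to 1 as r → ∞. -/
open SimpleGraph

section Aux
open MeasureTheory ENNReal Filter Real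
open scoped Classical

lemma bern_true (p : ℝ) : bernoulliMeasure p {true} = ENNReal.ofReal p := by
  simp [bernoulliMeasure, Measure.dirac_apply' _ (by trivial : MeasurableSet ({true} : Set Bool))]

lemma bern_false (p : ℝ) : bernoulliMeasure p {false} = ENNReal.ofReal (1 - p) := by
  simp [bernoulliMeasure, Measure.dirac_apply' _ (by trivial : MeasurableSet ({false} : Set Bool))]

lemma bern_bool_sum (p : ℝ) (h0 : 0 ≤ p) (h1 : p ≤ 1) :
    bernoulliMeasure p {true} + bernoulliMeasure p {false} = 1 := by
  rw [bern_true, bern_false, ← ENNReal.ofReal_add h0 (by linarith)]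
  norm_num

instance (p : ℝ) : IsFiniteMeasure (bernoulliMeasure p) := by
  constructor
  simp only [bernoulliMeasure, Measure.add_apply, Measure.smul_apply, smul_eq_mul,
    MeasureTheory.Measure.dirac_apply_of_mem (Set.mem_univ _)]
  simp only [mul_one]
  exact ENNReal.add_lt_top.mpr ⟨ENNReal.ofReal_lt_top, ENNReal.ofReal_lt_top⟩

-- singleton measure
lemma model_singleton (r : ℕ) (p : ℝ) (ω : Fin r × Fin r → Bool) :
    bipartiteRandomModel r p {ω} = ∏ e : Fin r × Fin r, bernoulliMeasure p {ω e} := by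
  rw [bipartiteRandomModel, ← Set.univ_pi_singleton ω, Measure.pi_pi]

lemma measurableSet_model {r : ℕ} (s : Set (Fin r × Fin r → Bool)) : MeasurableSet s := by
  have h1 : ∀ ω : Fin r × Fin r → Bool, MeasurableSet ({ω} : Set (Fin r × Fin r → Bool)) := by
    intro ω
    rw [← Set.univ_pi_singleton ω]
    exact MeasurableSet.univ_pi fun e => by trivial
  have : s = ⋃ ω ∈ s, {ω} := by simp
  rw [this]
  exact MeasurableSet.biUnion s.to_countable (fun ω _ => h1 ω)

lemma model_eq_sum (r : ℕ) (p : ℝ) (s : Finset (Fin r × Fin r → Bool)) :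
    bipartiteRandomModel r p ↑s
      = ∑ ω ∈ s, ∏ e : Fin r × Fin r, bernoulliMeasure p {ω e} := by
  have : (↑s : Set (Fin r × Fin r → Bool)) = ⋃ ω ∈ s, {ω} := by ext ω; simp
  conv_lhs => rw [this]
  rw [measure_biUnion_finset]
  · exact Finset.sum_congr rfl fun ω _ => model_singleton r p ω
  · intro a _ b _ hab
    simp [Set.disjoint_singleton, hab]
  · exact fun _ _ => measurableSet_model _

lemma model_univ (r : ℕ) (p : ℝ) (h0 : 0 ≤ p) (h1 : p ≤ 1) :
    bipartiteRandomModel r p Set.univ = 1 := by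
  rw [bipartiteRandomModel, Measure.pi_univ]
  have : bernoulliMeasure p Set.univ = 1 := by
    have : (Set.univ : Set Bool) = {true} ∪ {false} := by
      ext x; cases x <;> simp
    rw [this, measure_union (by simp) (by trivial), bern_bool_sum p h0 h1]
  simp only [this, Finset.prod_const, one_pow]

lemma key_measure (r : ℕ) (p : ℝ) (h0 : 0 ≤ p) (h1 : p ≤ 1) :
    bipartiteRandomModel r p {ω | ∀ i : Fin r, ∃ j, ω (i, j) = true}
      = (1 - ENNReal.ofReal ((1 - p) ^ r)) ^ r := by
  set b : Bool → ℝ≥0∞ := fun x => bernoulliMeasure p {x} with hb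
  set T : Finset (Fin r → Bool) := Finset.univ.erase (fun _ => false) with hTdef
  have hT : ∀ f : Fin r → Bool, f ∈ T ↔ ∃ j, f j = true := by
    intro f
    simp only [hTdef, Finset.mem_erase, Finset.mem_univ, and_true]
    constructor
    · intro h
      by_contra hc
      push_neg at hc
      exact h (funext fun j => by simpa using hc j)
    · rintro ⟨j, hj⟩ hf
      rw [hf] at hj; simp at hj
  have hall : ∑ f : Fin r → Bool, ∏ j : Fin r, b (f j) = 1 := by
    rw [← Fintype.piFinset_univ, ← Finset.prod_univ_sum]
    rw [show ∑ y ∈ (Finset.univ : Finset Bool), b y = 1 by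
      rw [Fintype.sum_bool]; exact bern_bool_sum p h0 h1]
    simp
  have hfalse : ∏ _j : Fin r, b false = ENNReal.ofReal ((1 - p) ^ r) := by
    rw [Finset.prod_const, hb]
    simp only [bern_false]
    rw [← ENNReal.ofReal_pow (by linarith)]
    simp
  have ht : ∑ f ∈ T, ∏ j : Fin r, b (f j) = 1 - ENNReal.ofReal ((1 - p) ^ r) := by
    have h2 : (∑ f ∈ T, ∏ j : Fin r, b (f j)) + ∏ j : Fin r, b false
        = ∑ f : Fin r → Bool, ∏ j : Fin r, b (f j) := by
      have := Finset.sum_erase_add Finset.univ (fun f : Fin r → Bool => ∏ j : Fin r, b (f j))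
        (Finset.mem_univ (fun _ => false))
      exact this
    rw [hall, hfalse] at h2
    exact ENNReal.eq_sub_of_add_eq (by simp) h2
  have hset : {ω : Fin r × Fin r → Bool | ∀ i : Fin r, ∃ j, ω (i, j) = true}
      = ↑(Finset.univ.filter (fun ω : Fin r × Fin r → Bool => ∀ i : Fin r, ∃ j, ω (i, j) = true)) := by
    ext ω; simp
  rw [hset, model_eq_sum, ← ht]
  have step : ∑ ω ∈ Finset.univ.filter
      (fun ω : Fin r × Fin r → Bool => ∀ i : Fin r, ∃ j, ω (i, j) = true),
      ∏ e : Fin r × Fin r, bernoulliMeasure p {ω e}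
      = ∑ g ∈ Fintype.piFinset (fun _ : Fin r => T), ∏ i : Fin r, ∏ j : Fin r, b (g i j) := by
    refine Finset.sum_nbij' (fun ω => fun i j => ω (i, j)) (fun g => fun e => g e.1 e.2)
      ?_ ?_ ?_ ?_ ?_
    · intro ω hω
      rw [Finset.mem_filter] at hω
      rw [Fintype.mem_piFinset]
      intro i
      exact (hT _).2 (hω.2 i)
    · intro g hg
      rw [Fintype.mem_piFinset] at hg
      rw [Finset.mem_filter]
      refine ⟨Finset.mem_univ _, fun i => (hT _).1 (hg i)⟩
    · intro ω _; rfl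
    · intro g _; rfl
    · intro ω _
      rw [Fintype.prod_prod_type]
  rw [step]
  have hpow : (∑ f ∈ T, ∏ j : Fin r, b (f j)) ^ r
      = ∏ _i : Fin r, ∑ f ∈ T, ∏ j : Fin r, b (f j) := by
    rw [Finset.prod_const, Finset.card_univ, Fintype.card_fin]
  rw [hpow, Finset.prod_univ_sum]

lemma model_lower (r : ℕ) (p : ℝ) (h0 : 0 ≤ p) (h1 : p ≤ 1) :
    1 - (1 - ENNReal.ofReal ((1 - p) ^ r)) ^ r
      ≤ bipartiteRandomModel r p {ω | ∃ v : Fin r ⊕ Fin r, ∀ u, ¬ (graphOf ω).Adj v u} := by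
  set S : Set (Fin r × Fin r → Bool) := {ω | ∀ i : Fin r, ∃ j, ω (i, j) = true} with hS
  have hcompl : Sᶜ = {ω : Fin r × Fin r → Bool | ∃ i : Fin r, ∀ j, ω (i, j) = false} := by
    ext ω
    simp only [hS, Set.mem_compl_iff, Set.mem_setOf_eq, not_forall, not_exists]
    constructor
    · rintro ⟨i, hi⟩; exact ⟨i, fun j => by simpa using hi j⟩
    · rintro ⟨i, hi⟩; exact ⟨i, fun j => by simp [hi j]⟩
  have hsub : Sᶜ ⊆ {ω | ∃ v : Fin r ⊕ Fin r, ∀ u, ¬ (graphOf ω).Adj v u} := by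
    rw [hcompl]
    rintro ω ⟨i, hi⟩
    refine ⟨Sum.inl i, fun u hadj => ?_⟩
    rw [graphOf, SimpleGraph.fromRel_adj] at hadj
    rcases hadj.2 with ⟨i', j', h1, h2, h3⟩ | ⟨i', j', h1, h2, h3⟩
    · rw [Sum.inl.injEq] at h1
      rw [← h1] at h3
      rw [hi j'] at h3
      exact Bool.false_ne_true h3
    · exact absurd h2 (by simp)
  have hmc : bipartiteRandomModel r p Sᶜ
      = 1 - (1 - ENNReal.ofReal ((1 - p) ^ r)) ^ r := by
    rw [measure_compl (measurableSet_model S) ?_]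
    · rw [model_univ r p h0 h1, hS, key_measure r p h0 h1]
    · exact ne_top_of_le_ne_top one_ne_top
        ((measure_mono (Set.subset_univ S)).trans (model_univ r p h0 h1).le)
  rw [← hmc]
  exact measure_mono hsub

lemma exp_ineq (x : ℝ) (h0 : 0 ≤ x) (h2 : x ≤ 1/2) :
    Real.exp (-(x + 2*x^2)) ≤ 1 - x := by
  have h1x : (0:ℝ) < 1 - x := by linarith
  have hlog : -(x + 2*x^2) ≤ Real.log (1 - x) := by
    have hinv : Real.log (1-x)⁻¹ ≤ (1-x)⁻¹ - 1 :=
      Real.log_le_sub_one_of_pos (by positivity)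
    rw [Real.log_inv] at hinv
    have hfrac : (1-x)⁻¹ - 1 = x / (1-x) := by field_simp; ring
    rw [hfrac] at hinv
    have : x / (1-x) ≤ x + 2*x^2 := by
      rw [div_le_iff₀ h1x]
      nlinarith
    linarith
  calc Real.exp (-(x + 2*x^2)) ≤ Real.exp (Real.log (1-x)) := Real.exp_le_exp.2 hlog
    _ = 1 - x := Real.exp_log h1x

lemma real_tendsto (w : ℕ → ℝ) (hw : Filter.Tendsto w Filter.atTop Filter.atTop)
    (p : ℕ → ℝ) (hp : ∀ r : ℕ, p r = (Real.log r - w r) / r)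
    (hp0 : ∀ r : ℕ, 0 ≤ p r) :
    Tendsto (fun r : ℕ => (1 - (1 - p r)^r)^r) atTop (nhds 0) := by
  have hcast : Tendsto (fun r : ℕ => (r:ℝ)) atTop atTop := tendsto_natCast_atTop_atTop
  have hlog2 : Tendsto (fun r : ℕ => (Real.log r)^2 / r) atTop (nhds 0) := by
    have := (Real.tendsto_pow_log_div_mul_add_atTop 1 0 2 one_ne_zero).comp hcast
    simpa [Function.comp_def] using this
  have hlog1 : Tendsto (fun r : ℕ => Real.log r / r) atTop (nhds 0) := by
    have := (Real.tendsto_pow_log_div_mul_add_atTop 1 0 1 one_ne_zero).comp hcast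
    simpa [Function.comp_def] using this
  -- c r → ∞
  have hc : Tendsto (fun r : ℕ => w r - 2 * ((Real.log r)^2 / r)) atTop atTop := by
    have h2 : Tendsto (fun r : ℕ => -(2 * ((Real.log r)^2 / r))) atTop (nhds (-(2*0))) :=
      ((hlog2.const_mul 2).neg)
    simpa [sub_eq_add_neg] using hw.atTop_add (by simpa using h2)
  have hupper : Tendsto (fun r : ℕ => Real.exp (-(Real.exp (w r - 2 * ((Real.log r)^2 / r)))) )
      atTop (nhds 0) := by
    exact Real.tendsto_exp_atBot.comp (tendsto_neg_atBot_iff.2 (Real.tendsto_exp_atTop.comp hc))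
  refine tendsto_of_tendsto_of_tendsto_of_le_of_le' tendsto_const_nhds hupper ?_ ?_
  · filter_upwards [eventually_ge_atTop 1, hw.eventually_ge_atTop 0,
      hlog1.eventually (eventually_le_nhds (by norm_num : (0:ℝ) < 1/2))] with r hr1 hw0 hhalf
    have hx0 := hp0 r
    have hR : (0:ℝ) < r := by exact_mod_cast hr1
    have hxhalf : p r ≤ 1/2 := by
      rw [hp r]
      calc (Real.log r - w r)/r ≤ Real.log r / r := by gcongr; linarith
        _ ≤ 1/2 := hhalf
    have hq1 : (1 - p r)^r ≤ 1 := pow_le_one₀ (by linarith) (by linarith)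
    exact pow_nonneg (by linarith) r
  · filter_upwards [eventually_ge_atTop 1, hw.eventually_ge_atTop 0,
      hlog1.eventually (eventually_le_nhds (by norm_num : (0:ℝ) < 1/2))] with r hr1 hw0 hhalf
    have hx0 := hp0 r
    have hR : (0:ℝ) < r := by exact_mod_cast hr1
    set x := p r with hxdef
    set L := Real.log r with hLdef
    set R := (r:ℝ) with hRdef
    have hxhalf : x ≤ 1/2 := by
      rw [hxdef, hp r]
      calc (L - w r)/R ≤ L / R := by gcongr; linarith
        _ ≤ 1/2 := hhalf
    set q := (1 - x)^r with hqdef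
    have hq0 : 0 ≤ q := pow_nonneg (by linarith) r
    have hq1 : q ≤ 1 := pow_le_one₀ (by linarith) (by linarith)
    have hxR : x * R = L - w r := by
      rw [hxdef, hp r, ← hLdef, ← hRdef]; field_simp
    have hLW0 : 0 ≤ L - w r := by rw [← hxR]; positivity
    have hx2R : x^2 * R = (L - w r)^2 / R := by
      rw [hxdef, hp r, ← hLdef, ← hRdef]; field_simp
    have step1 : (1 - q)^r ≤ Real.exp (-(R * q)) := by
      calc (1 - q)^r ≤ (Real.exp (-q))^r := by
            apply pow_le_pow_left₀ (by linarith)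
            have := Real.add_one_le_exp (-q)
            linarith
        _ = Real.exp (R * -q) := (Real.exp_nat_mul _ r).symm
        _ = Real.exp (-(R * q)) := by ring_nf
    have step2 : Real.exp (w r - 2 * (L^2 / R)) ≤ R * q := by
      have hqlow : Real.exp (-(x + 2*x^2) * R) ≤ q := by
        calc Real.exp (-(x + 2*x^2) * R) = Real.exp (R * -(x + 2*x^2)) := by ring_nf
          _ = (Real.exp (-(x + 2*x^2)))^r := Real.exp_nat_mul _ r
          _ ≤ (1 - x)^r := pow_le_pow_left₀ (Real.exp_nonneg _) (exp_ineq x hx0 hxhalf) r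
      have hRq : Real.exp (L + -(x + 2*x^2) * R) ≤ R * q := by
        rw [Real.exp_add, Real.exp_log hR]
        exact mul_le_mul_of_nonneg_left hqlow (le_of_lt hR)
      refine le_trans ?_ hRq
      apply Real.exp_le_exp.2
      have hexpand : L + -(x + 2*x^2) * R = w r - 2 * ((L - w r)^2 / R) := by
        have : (x + 2*x^2) * R = x * R + 2 * (x^2 * R) := by ring
        rw [neg_mul, this, hxR, hx2R]; ring
      rw [hexpand]
      have hsq : (L - w r)^2 ≤ L^2 := by nlinarith
      have : (L - w r)^2 / R ≤ L^2 / R := by gcongr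
      linarith
    calc (1 - (1-x)^r)^r = (1 - q)^r := by rw [hqdef]
      _ ≤ Real.exp (-(R * q)) := step1
      _ ≤ Real.exp (-(Real.exp (w r - 2 * (L^2 / R)))) := by
          apply Real.exp_le_exp.2; linarith


end Aux

open Filter MeasureTheory in
theorem stmt13 (w : ℕ → ℝ) (hw : Filter.Tendsto w Filter.atTop Filter.atTop)
    (p : ℕ → ℝ) (hp : ∀ r : ℕ, p r = (Real.log r - w r) / r)
    (hp0 : ∀ r : ℕ, 0 ≤ p r) :
    Filter.Tendsto
      (fun r : ℕ => bipartiteRandomModel r (p r)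
        {ω | ∃ v : Fin r ⊕ Fin r, ∀ u, ¬ (graphOf ω).Adj v u})
      Filter.atTop (nhds 1) := by
  have hreal := real_tendsto w hw p hp hp0
  have hofr : Tendsto (fun r : ℕ => ENNReal.ofReal ((1 - (1 - p r)^r)^r)) atTop (nhds 0) := by
    rw [show (0:ENNReal) = ENNReal.ofReal 0 by simp]
    exact ENNReal.tendsto_ofReal hreal
  have hlow : Tendsto (fun r : ℕ => 1 - ENNReal.ofReal ((1 - (1 - p r)^r)^r)) atTop (nhds 1) := by
    have := ENNReal.Tendsto.sub (tendsto_const_nhds (x := (1:ENNReal)) (f := atTop)) hofr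
      (Or.inl ENNReal.one_ne_top)
    simpa using this
  have hcast : Tendsto (fun r : ℕ => (r:ℝ)) atTop atTop := tendsto_natCast_atTop_atTop
  have hlog1 : Tendsto (fun r : ℕ => Real.log r / r) atTop (nhds 0) := by
    have := (Real.tendsto_pow_log_div_mul_add_atTop 1 0 1 one_ne_zero).comp hcast
    simpa [Function.comp_def] using this
  have hgood : ∀ᶠ r : ℕ in atTop, 0 ≤ p r ∧ p r ≤ 1 := by
    filter_upwards [eventually_ge_atTop 1, hw.eventually_ge_atTop 0,
      hlog1.eventually (eventually_le_nhds (by norm_num : (0:ℝ) < 1/2))] with r hr1 hw0 hhalf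
    have hR : (0:ℝ) < r := by exact_mod_cast hr1
    refine ⟨hp0 r, ?_⟩
    rw [hp r]
    calc (Real.log r - w r)/r ≤ Real.log r / r := by gcongr; linarith
      _ ≤ 1/2 := hhalf
      _ ≤ 1 := by norm_num
  refine tendsto_of_tendsto_of_tendsto_of_le_of_le' hlow tendsto_const_nhds ?_ ?_
  · filter_upwards [hgood] with r hr
    obtain ⟨h0, h1⟩ := hr
    have hkey := model_lower r (p r) h0 h1
    have hb0 : 0 ≤ (1 - p r)^r := pow_nonneg (by linarith) r
    have hb1 : (1 - p r)^r ≤ 1 := pow_le_one₀ (by linarith) (by linarith)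
    have heq : (1 - ENNReal.ofReal ((1 - p r)^r))^r
        = ENNReal.ofReal ((1 - (1 - p r)^r)^r) := by
      rw [ENNReal.ofReal_pow (by linarith : (0:ℝ) ≤ 1 - (1 - p r)^r)]
      congr 1
      have hadd : ENNReal.ofReal (1 - (1 - p r)^r) + ENNReal.ofReal ((1 - p r)^r) = 1 := by
        rw [← ENNReal.ofReal_add (by linarith) hb0]
        norm_num
      exact (ENNReal.eq_sub_of_add_eq ENNReal.ofReal_ne_top hadd).symm
    rw [heq] at hkey
    exact hkey
  · filter_upwards [hgood] with r hr
    calc bipartiteRandomModel r (p r) {ω | ∃ v : Fin r ⊕ Fin r, ∀ u, ¬ (graphOf ω).Adj v u}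
        ≤ bipartiteRandomModel r (p r) Set.univ := measure_mono (Set.subset_univ _)
      _ = 1 := model_univ r (p r) hr.1 hr.2
end
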